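/- Let F be a subfield of ℂ and Ψ a W-graph over F with vertex set X and vertex-labeling x ↦ I_x. Let M₀ be the F(u)-span in M(Ψ) of {x ∈ X : I_x ≠ ∅}. Then M₀ is an H^F-submodule of M(Ψ) and (M₀)_{ind} = {v ∈ M₀ : h v = ind(h) v for all h ∈ H^F} = {0}. -/

import Mathlib

open scoped Classical

noncomputable section

/-- The combinatorial data of a `W`-digraph over the index set `B` of the simple reflections:
for each label `i : B`, every vertex `v` lies on exactly one edge with label `i`, joining `v`
to `mate i v ≠ v`; `head i v` records whether `v` is the head (i.e. the edge is directed into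
`v`), and `dash i v` whether that edge is dashed (as opposed to solid). -/
structure WDigraphData (B V : Type*) where
  mate : B → V → V
  head : B → V → Bool
  dash : B → V → Bool
  mate_mate : ∀ i v, mate i (mate i v) = v
  mate_ne : ∀ i v, mate i v ≠ v
  head_mate : ∀ i v, head i (mate i v) = !(head i v)
  dash_mate : ∀ i v, dash i (mate i v) = dash i v

namespace WDigraphData

variable {B V : Type*} (Γ : WDigraphData B V)

/-- `Γ` has a solid edge `a → b` with label `i`. -/
def Solid (i : B) (a b : V) : Prop :=
  Γ.head i a = false ∧ Γ.dash i a = false ∧ Γ.mate i a = b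

/-- `Γ` has a dashed edge `a ⇢ b` with label `i`. -/
def Dashed (i : B) (a b : V) : Prop :=
  Γ.head i a = false ∧ Γ.dash i a = true ∧ Γ.mate i a = b

/-- There is a directed edge (solid or dashed) from `a` to `b` in `Γ`. -/
def DirEdge (a b : V) : Prop :=
  ∃ i, Γ.head i a = false ∧ Γ.mate i a = b

/-- `Γ.In v` is the set of labels of edges of `Γ` directed into `v`. -/
def In (v : V) : Set B := {i | Γ.head i v = true}

/-- `N_Γ(J)`: the number of vertices `v` with `In(v) = J`. -/
def N (J : Set B) : ℕ := Nat.card {v : V // Γ.In v = J}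

/-- The underlying undirected graph of `Γ`. -/
def underlying : SimpleGraph V where
  Adj a b := ∃ i, Γ.mate i a = b
  symm := by
    constructor
    rintro a b ⟨i, rfl⟩
    exact ⟨i, Γ.mate_mate i a⟩
  loopless := by
    constructor
    rintro a ⟨i, h⟩
    exact Γ.mate_ne i a h

/-- `Γ` contains a closed directed path of positive length. -/
def HasDirCycle : Prop :=
  ∃ (n : ℕ) (f : ℕ → V), 0 < n ∧ f n = f 0 ∧ ∀ k < n, Γ.DirEdge (f k) (f (k + 1))

/-- `Γ` is acyclic: it contains no closed directed path of positive length. -/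
def Acyclic : Prop := ¬ Γ.HasDirCycle

/-- The connected component `c` of `Γ` is acyclic: `Γ` has no closed directed path of
positive length lying in `c`. -/
def AcyclicComponent (c : Γ.underlying.ConnectedComponent) : Prop :=
  ¬ ∃ (n : ℕ) (f : ℕ → V), 0 < n ∧ f n = f 0 ∧
      (∀ k < n, Γ.DirEdge (f k) (f (k + 1))) ∧ Γ.underlying.connectedComponentMk (f 0) = c

/-- `Γ_J`: remove from `Γ` all edges whose labels lie outside `J`. -/
def restrict (J : Set B) : WDigraphData J V where
  mate i v := Γ.mate i v
  head i v := Γ.head i v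
  dash i v := Γ.dash i v
  mate_mate i v := Γ.mate_mate i v
  mate_ne i v := Γ.mate_ne i v
  head_mate i v := Γ.head_mate i v
  dash_mate i v := Γ.dash_mate i v

variable (K : Type*) [Field K] (q : K)

/-- The image of a basis vector `v` under the operator `τ_i` giving the action of `T_{s_i}`
on `M(Γ)`: for a solid edge `α → β` with label `i`, `T_{s_i} α = β` and
`T_{s_i} β = q²α + (q²−1)β`; for a dashed edge `α ⇢ β` with label `i`,
`T_{s_i} α = qα + (q+1)β` and `T_{s_i} β = (q²−q)α + (q²−q−1)β`. -/
def tauFun (i : B) (v : V) : V →₀ K :=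
  if Γ.head i v then
    if Γ.dash i v then
      (q ^ 2 - q) • Finsupp.single (Γ.mate i v) 1 + (q ^ 2 - q - 1) • Finsupp.single v 1
    else
      q ^ 2 • Finsupp.single (Γ.mate i v) 1 + (q ^ 2 - 1) • Finsupp.single v 1
  else
    if Γ.dash i v then
      q • Finsupp.single v 1 + (q + 1) • Finsupp.single (Γ.mate i v) 1
    else
      Finsupp.single (Γ.mate i v) 1

/-- The operator `τ_i` on the free module `M(Γ)` with basis the vertices of `Γ`. -/
def tau (i : B) : (V →₀ K) →ₗ[K] (V →₀ K) :=
  Finsupp.lsum K fun v => LinearMap.toSpanSingleton K (V →₀ K) (Γ.tauFun K q i v)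

end WDigraphData

/-- The data of a `W`-graph in the sense of Gyoja: vertex set `X`, vertex labels
`I x ⊆ B`, and edge weights `mu : X × X → F`. -/
structure WGraphData (B X F : Type*) where
  I : X → Set B
  mu : X → X → F

namespace WGraphData

variable {B X F : Type*} (Ψ : WGraphData B X F)
variable (K : Type*) [Field F] [Field K] [Algebra F K] [Fintype X] (q : K)

/-- The image of the basis vector `x` under the operator by which `T_{s_i}` acts on `M(Ψ)`:
`T_{s_i} x = −x` if `i ∈ I x`, and `T_{s_i} x = q²x + q Σ_{y, i ∈ I y} μ(y,x) y` otherwise. -/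
def tauFun (i : B) (x : X) : X →₀ K :=
  if i ∈ Ψ.I x then -Finsupp.single x 1
  else q ^ 2 • Finsupp.single x 1 +
    q • ∑ y : X, if i ∈ Ψ.I y then algebraMap F K (Ψ.mu y x) • Finsupp.single y (1 : K) else 0

/-- The operator by which `T_{s_i}` acts on the free module `M(Ψ)` with basis `X`. -/
def tau (i : B) : (X →₀ K) →ₗ[K] (X →₀ K) :=
  Finsupp.lsum K fun x => LinearMap.toSpanSingleton K (X →₀ K) (Ψ.tauFun K q i x)

/-- `N_Ψ(J)`: the number of vertices `x` with `I x = J`. -/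
def N (J : Set B) : ℕ := Nat.card {x : X // Ψ.I x = J}

end WGraphData

/-- For a module structure on `M` given by an algebra morphism `ρ : H → End M` and a linear
character `lam` of `H`, the eigenspace `M_lam = {v ∈ M | h v = lam(h) v for all h ∈ H}`. -/
def charSpace {K M H : Type*} [Field K] [AddCommGroup M] [Module K M] [Ring H] [Algebra K H]
    (ρ : H →ₐ[K] Module.End K M) (lam : H →ₐ[K] K) : Submodule K M where
  carrier := {v | ∀ h, ρ h v = lam h • v}
  add_mem' := by
    intro a b ha hb h
    rw [map_add, ha h, hb h, ← smul_add]
  zero_mem' := by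
    intro h
    rw [map_zero, smul_zero]
  smul_mem' := by
    intro c a ha h
    rw [map_smul, ha h, smul_comm]

end

/-!
`M₀` consists of the vectors supported on `{x | I x ≠ ∅}`. It is stable under each `T_s`,
since `T_s x` involves, besides `x`, only vertices `y` with `s ∈ I y`; and the `T_s` generate
the Hecke algebra, because `T_w = T_s T_{sw}` for a left descent `s` of `w`.

For the eigenspace, let `m ≠ 0` in `M₀` satisfy `T_s m = u² m` for all `s`, let `x₀` be a vertex
where the coefficient of `m` has the largest degree in `u` (the valuation at infinity of `F(u)`),
and let `s ∈ I x₀`. Comparing `x₀`-coefficients gives `(u² + 1) m_{x₀} = u Σ_y μ(x₀, y) m_y`,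
whose left side has larger degree than the right.
-/

section Stabilizer

variable {K A M : Type*} [CommSemiring K] [Semiring A] [Algebra K A]
  [AddCommMonoid M] [Module K M]

def Submodule.stabilizerSubalgebra (N : Submodule K M) : Subalgebra K (Module.End K M) where
  carrier := {f | ∀ m ∈ N, f m ∈ N}
  mul_mem' hf hg m hm := hf _ (hg m hm)
  add_mem' hf hg m hm := N.add_mem (hf m hm) (hg m hm)
  algebraMap_mem' c _ hm := N.smul_mem c hm

theorem Submodule.apply_mem_of_adjoin_eq_top {s : Set A} (hs : Algebra.adjoin K s = ⊤)
    (σ : A →ₐ[K] Module.End K M) (N : Submodule K M) (hN : ∀ a ∈ s, ∀ m ∈ N, σ a m ∈ N)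
    (a : A) : ∀ m ∈ N, σ a m ∈ N := by
  have : Algebra.adjoin K s ≤ N.stabilizerSubalgebra.comap σ := Algebra.adjoin_le hN
  exact this (hs ▸ Algebra.mem_top)

end Stabilizer

namespace CoxeterSystem

variable {B W : Type*} [Group W] {M : CoxeterMatrix B} (cs : CoxeterSystem M W)
  {K A : Type*} [CommSemiring K] [Semiring A] [Algebra K A] {T : W → A}

theorem mem_adjoin_simple_of_mul_simple (hT1 : T 1 = 1)
    (hTmul : ∀ (i : B) (w : W), cs.length w < cs.length (cs.simple i * w) →
      T (cs.simple i) * T w = T (cs.simple i * w)) (w : W) :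
    T w ∈ Algebra.adjoin K (Set.range fun i => T (cs.simple i)) := by
  induction hn : cs.length w using Nat.strong_induction_on generalizing w with
  | _ n ih =>
    rcases eq_or_ne w 1 with rfl | hw
    · rw [hT1]; exact Subalgebra.one_mem _
    obtain ⟨i, hi⟩ := cs.exists_leftDescent_of_ne_one hw
    have hcancel : cs.simple i * (cs.simple i * w) = w := cs.simple_mul_simple_cancel_left i
    have hTw : T w = T (cs.simple i) * T (cs.simple i * w) := by
      rw [hTmul i _ (by rwa [hcancel]), hcancel]
    rw [hTw]
    exact Subalgebra.mul_mem _ (Algebra.subset_adjoin ⟨i, rfl⟩) (ih _ (hn ▸ hi) _ rfl)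

theorem adjoin_simple_eq_top_of_basis (bT : Module.Basis W K A) (hbT : ∀ w, bT w = T w)
    (hT1 : T 1 = 1)
    (hTmul : ∀ (i : B) (w : W), cs.length w < cs.length (cs.simple i * w) →
      T (cs.simple i) * T w = T (cs.simple i * w)) :
    Algebra.adjoin K (Set.range fun i => T (cs.simple i)) = ⊤ := by
  refine Subalgebra.toSubmodule_injective (eq_top_iff.2 ?_)
  rw [← bT.span_eq, Submodule.span_le]
  rintro _ ⟨w, rfl⟩
  rw [hbT]
  exact cs.mem_adjoin_simple_of_mul_simple hT1 hTmul w

end CoxeterSystem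

theorem RatFunc.one_lt_inftyValuation_X (K : Type*) [Field K] [DecidableEq (RatFunc K)] :
    1 < RatFunc.inftyValuation K RatFunc.X := by
  rw [RatFunc.inftyValuation.X, ← WithZero.exp_zero, WithZero.exp_lt_exp]
  exact one_pos

namespace WGraphData

variable {B X F K : Type*} [Field F] [Field K] [Algebra F K] [Fintype X]
  (Ψ : WGraphData B X F) (q : K) {i : B}

theorem tau_single (x : X) : Ψ.tau K q i (Finsupp.single x 1) = Ψ.tauFun K q i x := by
  simp [tau]

theorem tauFun_mem_supported {x : X} (hx : Ψ.I x ≠ ∅) :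
    Ψ.tauFun K q i x ∈ Finsupp.supported K K {x | Ψ.I x ≠ ∅} := by
  have hsingle : Finsupp.single x 1 ∈ Finsupp.supported K K {x | Ψ.I x ≠ ∅} :=
    Finsupp.single_mem_supported K (1 : K) hx
  unfold tauFun
  split_ifs with hix
  · exact neg_mem hsingle
  refine add_mem (Submodule.smul_mem _ _ hsingle) (Submodule.smul_mem _ _ (sum_mem fun y _ => ?_))
  split_ifs with hiy
  · exact Submodule.smul_mem _ _
      (Finsupp.single_mem_supported K 1 (Set.nonempty_of_mem hiy).ne_empty)
  · exact zero_mem _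

theorem tau_mem_supported {m : X →₀ K} (hm : m ∈ Finsupp.supported K K {x | Ψ.I x ≠ ∅}) :
    Ψ.tau K q i m ∈ Finsupp.supported K K {x | Ψ.I x ≠ ∅} := by
  rw [Finsupp.supported_eq_span_single] at hm
  refine (Submodule.span_le (p := (Finsupp.supported K K _).comap (Ψ.tau K q i))).2 ?_ hm
  rintro _ ⟨x, hx, rfl⟩
  rw [SetLike.mem_coe, Submodule.mem_comap, tau_single]
  exact Ψ.tauFun_mem_supported q hx

theorem tauFun_apply_of_mem {x : X} (hx : i ∈ Ψ.I x) (y : X) :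
    Ψ.tauFun K q i y x =
      if i ∈ Ψ.I y then -Finsupp.single y 1 x else q * algebraMap F K (Ψ.mu x y) := by
  unfold tauFun
  split_ifs with hiy
  · rfl
  have hyx : y ≠ x := fun h => hiy (h ▸ hx)
  rw [Finsupp.add_apply, Finsupp.smul_apply, Finsupp.smul_apply, Finsupp.finsetSum_apply,
    Finset.sum_eq_single x (fun z _ hzx => by split_ifs <;> simp [hzx]) (by simp), if_pos hx]
  simp [hyx, Algebra.smul_def]

theorem tau_apply_of_mem {x : X} (hx : i ∈ Ψ.I x) (m : X →₀ K) :
    Ψ.tau K q i m x = -m x +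
      q * ∑ y, if i ∈ Ψ.I y then 0 else algebraMap F K (Ψ.mu x y) * m y := by
  have hterm : ∀ y, m y * Ψ.tauFun K q i y x = -(if y = x then m y else 0) +
      q * (if i ∈ Ψ.I y then 0 else algebraMap F K (Ψ.mu x y) * m y) := by
    intro y
    rw [Ψ.tauFun_apply_of_mem q hx]
    by_cases hiy : i ∈ Ψ.I y
    · simp [hiy, Finsupp.single_apply]
    · have hyx : y ≠ x := fun h => hiy (h ▸ hx)
      simp only [hiy, hyx, if_false, neg_zero, zero_add]
      ring
  rw [tau, Finsupp.lsum_apply, Finsupp.sum_apply, Finsupp.sum_fintype _ _ (by simp)]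
  simp only [LinearMap.toSpanSingleton_apply, Finsupp.smul_apply, smul_eq_mul, hterm,
    Finset.sum_add_distrib, Finset.sum_neg_distrib, Finset.sum_ite_eq', Finset.mem_univ,
    if_true, Finset.mul_sum]

theorem eq_zero_of_tau_eq_sq_smul {Γ₀ : Type*} [LinearOrderedCommGroupWithZero Γ₀]
    (v : Valuation K Γ₀) [v.IsTrivialOn F] (hq : 1 < v q) {m : X →₀ K}
    (hm : m ∈ Finsupp.supported K K {x | Ψ.I x ≠ ∅}) (htau : ∀ i, Ψ.tau K q i m = q ^ 2 • m) :
    m = 0 := by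
  by_contra hne
  obtain ⟨x₁, hx₁⟩ := Finsupp.ne_iff.1 hne
  have : Nonempty X := ⟨x₁⟩
  obtain ⟨x₀, hmax⟩ := Finite.exists_max fun y => v (m y)
  have hx₀ : v (m x₀) ≠ 0 := ((zero_lt_iff.2 ((v.ne_zero_iff).2 hx₁)).trans_le (hmax x₁)).ne'
  obtain ⟨i, hi⟩ : (Ψ.I x₀).Nonempty :=
    Set.nonempty_iff_ne_empty.2 <| (Finsupp.mem_supported K m).1 hm <|
      Finsupp.mem_support_iff.2 ((v.ne_zero_iff).1 hx₀)
  set S := ∑ y, if i ∈ Ψ.I y then 0 else algebraMap F K (Ψ.mu x₀ y) * m y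
  have hcoeff : (q ^ 2 + 1) * m x₀ = q * S := by
    have h := congrArg (· x₀) (htau i)
    simp only [Ψ.tau_apply_of_mem q hi, Finsupp.smul_apply, smul_eq_mul] at h
    linear_combination -h
  have hS : v S ≤ v (m x₀) := by
    refine v.map_sum_le fun y _ => ?_
    split_ifs
    · simp
    · rw [v.map_mul]
      exact mul_le_of_le_one_of_le
        (Valuation.IsTrivialOn.valuation_algebraMap_le_one v _) (hmax y)
  have hq2 : v (q ^ 2 + 1) = v q * v q := by
    rw [v.map_add_eq_of_lt_left, v.map_pow, sq]
    simpa only [v.map_one, v.map_pow] using one_lt_pow₀ hq two_ne_zero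
  have hle : v q * (v q * v (m x₀)) ≤ v q * v (m x₀) :=
    calc v q * (v q * v (m x₀)) = v (q * S) := by rw [← hcoeff, v.map_mul, hq2, mul_assoc]
      _ ≤ v q * v (m x₀) := by rw [v.map_mul]; gcongr
  have hpos : 0 < v q * v (m x₀) := mul_pos (zero_lt_one.trans hq) (zero_lt_iff.2 hx₀)
  exact hq.not_ge ((mul_le_iff_le_one_left hpos).1 hle)

end WGraphData

theorem wgraph_span_nonempty_labels_submodule_ind_trivial_general
    {B W X : Type*} [Group W] {M : CoxeterMatrix B} (cs : CoxeterSystem M W)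
    (F : Subfield ℂ)
    -- `H` is the Hecke algebra of `(W, S)` over `F(u)`, with standard basis `T`
    (H : Type*) [Ring H] [Algebra (RatFunc F) H]
    (T : W → H) (bT : Module.Basis W (RatFunc F) H) (hbT : ∀ w, bT w = T w)
    (hT1 : T 1 = 1)
    (hTmul : ∀ (i : B) (w : W), cs.length w < cs.length (cs.simple i * w) →
      T (cs.simple i) * T w = T (cs.simple i * w))
    -- `Ψ` is a `W`-graph over `F`, with `H^F`-module `M(Ψ)` given by `σ`
    [Fintype X] (Ψ : WGraphData B X F)
    (σ : H →ₐ[RatFunc F] Module.End (RatFunc F) (X →₀ RatFunc F))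
    (hσ : ∀ i : B, σ (T (cs.simple i)) = Ψ.tau (RatFunc F) RatFunc.X i)
    -- `ind` is the index character of `H^F`
    (ind : H →ₐ[RatFunc F] RatFunc F)
    (hind : ∀ w : W, ind (T w) = (RatFunc.X : RatFunc F) ^ (2 * cs.length w))
    -- `M₀` is the `F(u)`-span of the basis vectors `x` with `I_x ≠ ∅`
    (M₀ : Submodule (RatFunc F) (X →₀ RatFunc F))
    (hM₀ : M₀ = Submodule.span (RatFunc F)
      ((fun x : X => Finsupp.single x (1 : RatFunc F)) '' {x : X | Ψ.I x ≠ ∅})) :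
    (∀ (h : H), ∀ m ∈ M₀, σ h m ∈ M₀) ∧
      (∀ m ∈ M₀, (∀ h : H, σ h m = ind h • m) → m = 0) := by
  have hM : M₀ = Finsupp.supported _ _ {x | Ψ.I x ≠ ∅} :=
    hM₀.trans (Finsupp.supported_eq_span_single _ _).symm
  subst hM
  refine ⟨fun h => Submodule.apply_mem_of_adjoin_eq_top
    (cs.adjoin_simple_eq_top_of_basis bT hbT hT1 hTmul) σ _ ?_ h, fun m hm hchar => ?_⟩
  · rintro _ ⟨i, rfl⟩ m hm
    rw [hσ]
    exact Ψ.tau_mem_supported _ hm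
  · refine Ψ.eq_zero_of_tau_eq_sq_smul _ (RatFunc.inftyValuation F)
      (RatFunc.one_lt_inftyValuation_X F) hm fun i => ?_
    rw [← hσ, hchar, hind, cs.length_simple, mul_one]

/-- Let `F` be a subfield of `ℂ` and `Ψ` a `W`-graph over `F`.  Let `M₀`
be the `F(u)`-span in `M(Ψ)` of `{x ∈ X : I_x ≠ ∅}`.  Then `M₀` is an `H^F`-submodule of
`M(Ψ)` and `(M₀)_{ind} = {0}`. -/
theorem wgraph_span_nonempty_labels_submodule_ind_trivial
    {B W X : Type*} [Group W] {M : CoxeterMatrix B} (cs : CoxeterSystem M W)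
    (F : Subfield ℂ)
    -- `H` is the Hecke algebra of `(W, S)` over `F(u)`, with standard basis `T`
    (H : Type*) [Ring H] [Algebra (RatFunc F) H]
    (T : W → H) (bT : Module.Basis W (RatFunc F) H) (hbT : ∀ w, bT w = T w)
    (hT1 : T 1 = 1)
    (hTmul : ∀ (i : B) (w : W), cs.length w < cs.length (cs.simple i * w) →
      T (cs.simple i) * T w = T (cs.simple i * w))
    (hTsq : ∀ i : B, T (cs.simple i) * T (cs.simple i) =
      (RatFunc.X ^ 2 : RatFunc F) • (1 : H) +
        ((RatFunc.X ^ 2 - 1 : RatFunc F)) • T (cs.simple i))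
    -- `Ψ` is a `W`-graph over `F`, with `H^F`-module `M(Ψ)` given by `σ`
    [Fintype X] (Ψ : WGraphData B X F)
    (σ : H →ₐ[RatFunc F] Module.End (RatFunc F) (X →₀ RatFunc F))
    (hσ : ∀ i : B, σ (T (cs.simple i)) = Ψ.tau (RatFunc F) RatFunc.X i)
    -- `ind` is the index character of `H^F`
    (ind : H →ₐ[RatFunc F] RatFunc F)
    (hind : ∀ w : W, ind (T w) = (RatFunc.X : RatFunc F) ^ (2 * cs.length w))
    -- `M₀` is the `F(u)`-span of the basis vectors `x` with `I_x ≠ ∅`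
    (M₀ : Submodule (RatFunc F) (X →₀ RatFunc F))
    (hM₀ : M₀ = Submodule.span (RatFunc F)
      ((fun x : X => Finsupp.single x (1 : RatFunc F)) '' {x : X | Ψ.I x ≠ ∅})) :
    (∀ (h : H), ∀ m ∈ M₀, σ h m ∈ M₀) ∧
      (∀ m ∈ M₀, (∀ h : H, σ h m = ind h • m) → m = 0) :=
  wgraph_span_nonempty_labels_submodule_ind_trivial_general cs F H T bT hbT hT1 hTmul Ψ σ hσ ind
    hind M₀ hM₀
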